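/- Define w₀ = a₀ and w_ℓ = w_{ℓ−1} a_ℓ w_{ℓ−1}, and let wᵢ' be wᵢ with the last letter a₀ removed. Then for every i ≥ 0, the words wᵢ'·a₀·(wᵢ')ᴿ and wᵢ'·(wᵢ')ᴿ are ∼_{2i}-equivalent, i.e., they have the same subsequences of length at most 2i. -/

import Mathlib

/-!
Every sublist of `wᵢ'` of length less than `i` stays a sublist after appending `a₀`: in
`w'_{n+1} = wₙ aₙ₊₁ w'ₙ` a sublist either has a short part in `w'ₙ` (induction), or lies entirely in
`w'ₙ`, and then `w'ₙ a₀ = wₙ` is a prefix. Now a sublist `x a₀ z` of `wᵢ' a₀ (wᵢ')ᴿ` of length at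
most `2i` has `|x| < i` or `|z| < i`, so the middle `a₀` can be moved into `wᵢ'` or, by symmetry,
into `(wᵢ')ᴿ`.
-/

/-- The set of (scattered) subsequences of `w` of length at most `k`. -/
def subk {α : Type*} (k : ℕ) (w : List α) : Set (List α) :=
  {u | u.Sublist w ∧ u.length ≤ k}

/-- `u ∼ₖ v` : same subsequences of length at most `k`. -/
def simk {α : Type*} (k : ℕ) (u v : List α) : Prop := subk k u = subk k v

/-- `L` is `k`-piecewise testable. -/
def IsKPT {α : Type*} (k : ℕ) (L : Set (List α)) : Prop :=
  ∀ u v : List α, simk k u v → (u ∈ L ↔ v ∈ L)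

/-- `w₀ = a₀`, `w_{ℓ+1} = w_ℓ · a_{ℓ+1} · w_ℓ`, letters `aⱼ` encoded as `j : ℕ`. -/
def wrd : ℕ → List ℕ
  | 0 => [0]
  | (ℓ + 1) => wrd ℓ ++ [ℓ + 1] ++ wrd ℓ

theorem subk_subset_subk_of_sublist {α : Type*} {k : ℕ} {u v : List α} (h : u.Sublist v) :
    subk k u ⊆ subk k v :=
  fun _ hx => ⟨hx.1.trans h, hx.2⟩

theorem simk_append_singleton_append_reverse {α : Type*} {k : ℕ} {A : List α} {a : α}
    (hA : ∀ x : List α, x.Sublist A → x.length < k → (x ++ [a]).Sublist A) :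
    simk (2 * k) (A ++ [a] ++ A.reverse) (A ++ A.reverse) := by
  refine Set.Subset.antisymm ?_ (subk_subset_subk_of_sublist ?_)
  · rintro u ⟨hu, hlen⟩
    refine ⟨?_, hlen⟩
    obtain ⟨v, z, rfl, hv, hz⟩ := List.sublist_append_iff.1 hu
    obtain ⟨x, q, rfl, hx, hq⟩ := List.sublist_append_iff.1 hv
    rcases List.sublist_singleton.1 hq with rfl | rfl
    · simpa using hx.append hz
    have hxz : x.length + z.length < 2 * k := by simp at hlen; omega
    rcases lt_or_ge x.length k with hxk | hzk
    · exact (hA x hx hxk).append hz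
    · have hz' := hA z.reverse (List.sublist_reverse_iff.1 hz) (by simp; omega)
      have haz : (a :: z).Sublist A.reverse := by
        simpa using List.reverse_sublist.2 hz'
      simpa using hx.append haz
  · simp

theorem wrd_ne_nil (i : ℕ) : wrd i ≠ [] := by
  cases i <;> simp [wrd]

theorem dropLast_wrd_append_zero (i : ℕ) : (wrd i).dropLast ++ [0] = wrd i := by
  induction i with
  | zero => rfl
  | succ n ih =>
    rw [wrd, List.dropLast_append_of_ne_nil (wrd_ne_nil n), List.append_assoc, ih]

theorem dropLast_wrd_succ (n : ℕ) :
    (wrd (n + 1)).dropLast = wrd n ++ [n + 1] ++ (wrd n).dropLast :=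
  List.dropLast_append_of_ne_nil (wrd_ne_nil n)

theorem append_zero_sublist_dropLast_wrd {i : ℕ} {x : List ℕ}
    (hx : x.Sublist (wrd i).dropLast) (hlen : x.length < i) :
    (x ++ [0]).Sublist (wrd i).dropLast := by
  induction i generalizing x with
  | zero => omega
  | succ n ih =>
    rw [dropLast_wrd_succ] at hx ⊢
    obtain ⟨p, q, rfl, hp, hq⟩ := List.sublist_append_iff.1 hx
    by_cases hqn : q.length < n
    · rw [List.append_assoc]
      exact hp.append (ih hq hqn)
    · obtain rfl : p = [] := by simp at hlen; exact List.eq_nil_of_length_eq_zero (by omega)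
      have hq0 : (q ++ [0]).Sublist (wrd n) := by
        simpa only [dropLast_wrd_append_zero] using hq.append_right [0]
      exact hq0.trans (by simp)

theorem stmt_11 (i : ℕ) :
    simk (2 * i)
      ((wrd i).dropLast ++ [0] ++ ((wrd i).dropLast).reverse)
      ((wrd i).dropLast ++ ((wrd i).dropLast).reverse) :=
  simk_append_singleton_append_reverse fun _ => append_zero_sublist_dropLast_wrd
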